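/- Let G be a finite group of even order with set of involutions S, |S| = n. Suppose that for every involution u there is an involution v not commuting with u, and |G| ≥ n·n!. Then the power graph of G has a perfect matching. -/

import Mathlib

/-!
Let `K` be the centralizer of the set `S` of involutions. Each involution fails to commute with
some involution, so `K` contains no involution and `|K|` is odd. Since `G ⧸ K` embeds in `Sym(S)`,
`|G : K| ≤ |S|!` and hence `|K| ≥ |S|`. As `|G|` is even, `|S|` is odd, so `K` contains an
inverse-closed set `L ∋ 1` with `|L| = |S|`; fix a bijection `ψ : S → L`. For `r² = 1` and `k ∈ K`
commuting with `r`, both `r = (r k) ^ |K|` and `k = (r k) ^ (|K| + 1)` are powers of `r k`, so `r k`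
determines `(r, k)`. Hence the edges `u — u ψ(u)⁻¹` (for `ψ u ≠ 1`) and `ψ u — u ψ u` form a
matching that covers `1` and all involutions and whose vertex set is closed under inversion; every
other element is matched with its inverse.
-/

open SimpleGraph

def powerGraph (G : Type*) [Group G] : SimpleGraph G where
  Adj x y := x ≠ y ∧ ((∃ n : ℕ, y ^ n = x) ∨ (∃ n : ℕ, x ^ n = y))
  symm := ⟨fun x y ⟨h, hp⟩ => ⟨h.symm, hp.symm⟩⟩
  loopless := ⟨fun x ⟨h, _⟩ => h rfl⟩

noncomputable def matchingNumber {V : Type*} (Γ : SimpleGraph V) : ℕ :=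
  sSup {n | ∃ M : Γ.Subgraph, M.IsMatching ∧ M.edgeSet.ncard = n}

def hasPerfectMatching {V : Type*} (Γ : SimpleGraph V) : Prop :=
  ∃ M : Γ.Subgraph, M.IsPerfectMatching

theorem SimpleGraph.Subgraph.exists_isMatching_of_injective {V ι : Type*} {Γ : SimpleGraph V}
    (f : ι ⊕ ι → V) (hf : Function.Injective f) (hadj : ∀ i, Γ.Adj (f (.inl i)) (f (.inr i))) :
    ∃ M : Γ.Subgraph, M.verts = Set.range f ∧ M.IsMatching := by
  have hd : Disjoint (Set.range (f ∘ .inl)) (Set.range (f ∘ .inr)) := by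
    rw [Set.disjoint_left]
    rintro _ ⟨i, rfl⟩ ⟨j, hj⟩
    exact Sum.inr_ne_inl (hf hj)
  obtain ⟨M, hMverts, hM⟩ := IsMatching.exists_of_disjoint_sets_of_equiv hd
    ((Equiv.ofInjective _ (hf.comp Sum.inl_injective)).symm.trans
      (Equiv.ofInjective _ (hf.comp Sum.inr_injective)))
    (by rintro ⟨_, i, rfl⟩; rw [Equiv.trans_apply, Equiv.ofInjective_symm_apply]; exact hadj i)
  exact ⟨M, hMverts.trans (Sum.range_eq f).symm, hM⟩

theorem Set.exists_inv_closed_subset_ncard_eq_two_mul {α : Type*} [InvolutiveInv α] {B : Set α}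
    (hB : B.Finite) (hinv : ∀ x ∈ B, x⁻¹ ∈ B) (hfix : ∀ x ∈ B, x⁻¹ ≠ x) {k : ℕ}
    (hk : 2 * k ≤ B.ncard) : ∃ H ⊆ B, (∀ x ∈ H, x⁻¹ ∈ H) ∧ H.ncard = 2 * k := by
  -- an arbitrary linear order picks one element `x < x⁻¹` out of each pair `{x, x⁻¹}`
  let _ : LinearOrder α := IsWellOrder.linearOrder WellOrderingRel
  set P := {x ∈ B | x < x⁻¹}
  have hdisj : Disjoint P P⁻¹ := by
    rw [Set.disjoint_left]
    rintro x ⟨-, hx⟩ ⟨-, hx'⟩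
    rw [inv_inv] at hx'
    exact lt_asymm hx hx'
  have hunion : P ∪ P⁻¹ = B := by
    ext x
    refine ⟨by rintro (⟨hx, -⟩ | ⟨hx, -⟩); exacts [hx, inv_inv x ▸ hinv _ hx], fun hx => ?_⟩
    rcases (hfix x hx).lt_or_gt with hlt | hlt
    · exact .inr ⟨hinv x hx, by rwa [inv_inv]⟩
    · exact .inl ⟨hx, hlt⟩
  have hPfin : P.Finite := hB.subset fun x hx => hx.1
  have hkP : k ≤ P.ncard := by
    rw [← hunion, Set.ncard_union_eq hdisj hPfin hPfin.inv, Set.ncard_inv] at hk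
    omega
  obtain ⟨Q, hQP, hQ⟩ := Set.exists_subset_card_eq hkP
  have hQfin : Q.Finite := hPfin.subset hQP
  refine ⟨Q ∪ Q⁻¹, ?_, ?_, ?_⟩
  · rw [← hunion]
    exact Set.union_subset_union hQP (Set.inv_subset_inv.mpr hQP)
  · rintro x (hx | hx)
    · exact .inr (by rwa [Set.mem_inv, inv_inv])
    · exact .inl hx
  · rw [Set.ncard_union_eq (hdisj.mono hQP (Set.inv_subset_inv.mpr hQP)) hQfin hQfin.inv,
      Set.ncard_inv, hQ]
    ring

section Group

variable {G : Type*} [Group G]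

theorem inv_eq_self_iff_eq_one_or_orderOf_eq_two {x : G} : x⁻¹ = x ↔ x = 1 ∨ orderOf x = 2 := by
  rw [orderOf_eq_prime_iff, inv_eq_iff_mul_eq_one, ← sq]
  by_cases hx : x = 1 <;> simp [hx]

theorem eq_one_of_sq_eq_one_of_pow_odd {k : G} (h2 : k ^ 2 = 1) {m : ℕ} (hm : Odd m)
    (hk : k ^ m = 1) : k = 1 := by
  obtain ⟨t, rfl⟩ := hm
  rwa [pow_succ, pow_mul, h2, one_pow, one_mul] at hk

theorem sq_eq_one_of_orderOf_eq_two {u : G} (hu : orderOf u = 2) : u ^ 2 = 1 :=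
  hu ▸ pow_orderOf_eq_one u

theorem Commute.mul_pow_odd {r k : G} (hrk : Commute r k) (hr : r ^ 2 = 1) {m : ℕ} (hm : Odd m)
    (hk : k ^ m = 1) : (r * k) ^ m = r ∧ (r * k) ^ (m + 1) = k := by
  have hrm : r ^ m = r := by
    obtain ⟨t, rfl⟩ := hm
    rw [pow_succ, pow_mul, hr, one_pow, one_mul]
  refine ⟨by rw [hrk.mul_pow, hrm, hk, mul_one], ?_⟩
  rw [hrk.mul_pow, pow_succ, pow_succ, hrm, hk, ← sq, hr, one_mul, one_mul]

theorem odd_card_of_forall_orderOf_ne_two [Finite G] (h : ∀ x : G, orderOf x ≠ 2) :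
    Odd (Nat.card G) := by
  rw [← Nat.not_even_iff_odd, even_iff_two_dvd]
  intro h2
  obtain ⟨x, hx⟩ := exists_prime_orderOf_dvd_card' 2 h2
  exact h x hx

theorem odd_ncard_orderOf_eq_two [Fintype G] (h : Even (Fintype.card G)) :
    Odd {t : G | orderOf t = 2}.ncard := by
  classical
  have hmod := Equiv.Perm.card_fixedPoints_modEq (p := 2) (n := 1)
    (f := fun x : G => x⁻¹) (funext inv_inv)
  have hfix : Function.fixedPoints (fun x : G => x⁻¹) = insert 1 {t : G | orderOf t = 2} := by
    ext x
    exact inv_eq_self_iff_eq_one_or_orderOf_eq_two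
  simp only [← Nat.card_eq_fintype_card, Nat.card_coe_set_eq, hfix] at hmod
  rw [Set.ncard_insert_of_notMem (by simp)] at hmod
  rw [Nat.even_iff, Fintype.card_eq_nat_card] at h
  rw [Nat.odd_iff]
  unfold Nat.ModEq at hmod
  omega

theorem Subgroup.index_centralizer_le_factorial (S : Set G) [Finite S]
    (hS : ∀ g x, g * x * g⁻¹ ∈ S ↔ x ∈ S) : (centralizer S).index ≤ (Nat.card S).factorial := by
  let ρ : G →* Equiv.Perm S :=
    { toFun g := Equiv.Perm.subtypePerm (MulAut.conj g).toEquiv (hS g)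
      map_one' := by ext; simp
      map_mul' g h := by
        ext x
        show g * h * (x : G) * (g * h)⁻¹ = g * (h * x * h⁻¹) * g⁻¹
        group }
  have hker : ρ.ker = centralizer S := by
    ext g
    simp [ρ, Equiv.ext_iff, mem_centralizer_iff, eq_mul_inv_iff_mul_eq, eq_comm]
  rw [← hker, index_ker, ← Nat.card_perm]
  exact card_le_card_group _

theorem Subgroup.le_card_centralizer_of_mul_factorial_le [Finite G] (S : Set G)
    (hS : ∀ g x, g * x * g⁻¹ ∈ S ↔ x ∈ S)
    (hc : Nat.card S * (Nat.card S).factorial ≤ Nat.card G) :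
    Nat.card S ≤ Nat.card (centralizer S) := by
  refine Nat.le_of_mul_le_mul_right (hc.trans ?_) (Nat.factorial_pos _)
  rw [← (centralizer S).card_mul_index]
  exact Nat.mul_le_mul_left _ (index_centralizer_le_factorial S hS)

theorem Subgroup.pow_card_eq_one_of_mem (K : Subgroup G) {k : G} (hk : k ∈ K) :
    k ^ Nat.card K = 1 := by
  have := congrArg Subtype.val (pow_card_eq_one' (x := (⟨k, hk⟩ : K)))
  simpa only [SubgroupClass.coe_pow, OneMemClass.coe_one] using this

theorem Subgroup.exists_inv_closed_subset_ncard_eq_of_odd (K : Subgroup G) [Finite K]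
    (hK : Odd (Nat.card K)) {n : ℕ} (hn : Odd n) (hnK : n ≤ Nat.card K) :
    ∃ L ⊆ (K : Set G), 1 ∈ L ∧ (∀ k ∈ L, k⁻¹ ∈ L) ∧ L.ncard = n := by
  obtain ⟨j, rfl⟩ := hn
  have hB : 2 * j ≤ ((K : Set G) \ {1}).ncard := by
    rw [Set.ncard_sdiff_singleton_of_mem K.one_mem, ← Nat.card_coe_set_eq]
    simp only [SetLike.coe_sort_coe]
    omega
  obtain ⟨H, hHB, hHinv, hH⟩ :=
    Set.exists_inv_closed_subset_ncard_eq_two_mul (B := (K : Set G) \ {1}) (Set.toFinite _)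
    (fun k hk => ⟨K.inv_mem hk.1, by simpa using hk.2⟩)
    (fun k hk hkk => hk.2 (eq_one_of_sq_eq_one_of_pow_odd
      (by rw [sq, ← inv_eq_iff_mul_eq_one.mp hkk]) hK (K.pow_card_eq_one_of_mem hk.1))) hB
  refine ⟨insert 1 H, Set.insert_subset K.one_mem (hHB.trans Set.sdiff_subset), Set.mem_insert _ _,
    ?_, ?_⟩
  · rintro k (rfl | hk)
    · simp
    · exact .inr (hHinv k hk)
  · rw [Set.ncard_insert_of_notMem (fun h1 => (hHB h1).2 rfl) ((Set.toFinite _).subset hHB), hH]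

end Group

section PowerGraph

variable {G : Type*} [Group G]

theorem powerGraph_adj_of_pow_eq {x y : G} (hne : x ≠ y) {m : ℕ} (h : y ^ m = x) :
    (powerGraph G).Adj x y :=
  ⟨hne, .inl ⟨m, h⟩⟩

theorem powerGraph_adj_inv [Finite G] {x : G} (hx : x⁻¹ ≠ x) : (powerGraph G).Adj x x⁻¹ := by
  refine (powerGraph_adj_of_pow_eq hx (m := orderOf x - 1) ?_).symm
  exact eq_inv_of_mul_eq_one_left (by rw [pow_sub_one_mul (orderOf_pos x).ne', pow_orderOf_eq_one])

theorem exists_isMatching_powerGraph_inv [Finite G] (A : Set G) (hinv : ∀ x ∈ A, x⁻¹ ∈ A)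
    (hfix : ∀ x ∈ A, x⁻¹ ≠ x) : ∃ M : (powerGraph G).Subgraph, M.verts = A ∧ M.IsMatching := by
  refine ⟨{ verts := A
            Adj x y := x ∈ A ∧ y = x⁻¹
            adj_sub := by rintro x _ ⟨hx, rfl⟩; exact powerGraph_adj_inv (hfix x hx)
            edge_vert := And.left
            symm := ⟨by rintro x _ ⟨hx, rfl⟩; exact ⟨hinv x hx, (inv_inv x).symm⟩⟩ }, rfl, ?_⟩
  intro x hx
  exact ⟨x⁻¹, ⟨hx, rfl⟩, fun y hy => hy.2⟩

theorem hasPerfectMatching_powerGraph_of_isMatching [Finite G] {M : (powerGraph G).Subgraph}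
    (hM : M.IsMatching) (hinv : ∀ x ∈ M.verts, x⁻¹ ∈ M.verts)
    (hfix : ∀ x : G, x⁻¹ = x → x ∈ M.verts) : hasPerfectMatching (powerGraph G) := by
  obtain ⟨M', hM'verts, hM'⟩ := exists_isMatching_powerGraph_inv M.vertsᶜ
    (fun x hx hx' => hx (inv_inv x ▸ hinv _ hx')) (fun x hx hfx => hx (hfix x hfx))
  refine ⟨M ⊔ M', hM.sup hM' ?_, fun x => ?_⟩
  · rw [hM.support_eq_verts, hM'.support_eq_verts, hM'verts]
    exact disjoint_compl_right
  · rw [Subgraph.verts_sup, hM'verts, Set.union_compl_self]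
    trivial

section Pairing

variable {L : Set G} (ψ : {u : G // orderOf u = 2} ≃ L)

-- The vertex `r * k` is recorded by its coordinates `(r, k)`: `u = u * 1` is matched with
-- `u * (ψ u)⁻¹` when `ψ u ≠ 1`, and `ψ u = 1 * ψ u` with `u * ψ u` (for the involution `u` with
-- `ψ u = 1` this is the edge from `1` to `u`).
def pairingCoord :
    ({u // (ψ u : G) ≠ 1} ⊕ {u : G // orderOf u = 2}) ⊕
      ({u // (ψ u : G) ≠ 1} ⊕ {u : G // orderOf u = 2}) → G × G :=
  Sum.elim (Sum.elim (fun u => (u.1, 1)) (fun u => (1, ψ u)))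
    (Sum.elim (fun u => (u.1, (ψ u.1 : G)⁻¹)) (fun u => (u, ψ u)))

def pairingVertex
    (i : ({u // (ψ u : G) ≠ 1} ⊕ {u : G // orderOf u = 2}) ⊕
      ({u // (ψ u : G) ≠ 1} ⊕ {u : G // orderOf u = 2})) : G :=
  (pairingCoord ψ i).1 * (pairingCoord ψ i).2

theorem pow_pairingVertex {m : ℕ} (hm : Odd m) (hLpow : ∀ k ∈ L, k ^ m = 1)
    (hcomm : ∀ u : G, orderOf u = 2 → ∀ k ∈ L, Commute u k) (i) :
    pairingVertex ψ i ^ m = (pairingCoord ψ i).1 ∧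
      pairingVertex ψ i ^ (m + 1) = (pairingCoord ψ i).2 := by
  have hψ (u : {u : G // orderOf u = 2}) : (ψ u : G) ^ m = 1 := hLpow _ (ψ u).2
  rcases i with (u | u) | (u | u)
  · exact (Commute.one_right _).mul_pow_odd (sq_eq_one_of_orderOf_eq_two u.1.2) hm (one_pow m)
  · exact (Commute.one_left _).mul_pow_odd (one_pow 2) hm (hψ u)
  · exact (hcomm _ u.1.2 _ (ψ u.1).2).inv_right.mul_pow_odd (sq_eq_one_of_orderOf_eq_two u.1.2) hm
      (by rw [inv_pow, hψ, inv_one])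
  · exact (hcomm _ u.2 _ (ψ u).2).mul_pow_odd (sq_eq_one_of_orderOf_eq_two u.2) hm (hψ u)

theorem pairingCoord_injective {m : ℕ} (hm : Odd m) (hLpow : ∀ k ∈ L, k ^ m = 1) :
    Function.Injective (pairingCoord ψ) := by
  have hne (u : {u : G // orderOf u = 2}) : (u : G) ≠ 1 := (orderOf_eq_prime_iff.mp u.2).2
  have hψ {u v : {u : G // orderOf u = 2}} (h : (ψ u : G) = ψ v) : u = v :=
    ψ.injective (Subtype.ext h)
  have hinv (u : {u // (ψ u : G) ≠ 1}) : (ψ u.1 : G)⁻¹ ≠ ψ u.1 := fun h =>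
    u.2 (eq_one_of_sq_eq_one_of_pow_odd (by rw [sq]; exact inv_eq_iff_mul_eq_one.mp h) hm
      (hLpow _ (ψ u.1).2))
  unfold pairingCoord
  refine .sumElim (.sumElim ?_ ?_ ?_) (.sumElim ?_ ?_ ?_) ?_
  · exact fun u v h => Subtype.ext (Subtype.ext (congrArg Prod.fst h))
  · exact fun u v h => hψ (congrArg Prod.snd h)
  · exact fun u v h => hne u.1 (congrArg Prod.fst h)
  · exact fun u v h => Subtype.ext (Subtype.ext (congrArg Prod.fst h))
  · exact fun u v h => Subtype.ext (congrArg Prod.fst h)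
  · intro u v h
    obtain rfl : u.1 = v := Subtype.ext (congrArg Prod.fst h)
    exact hinv u (congrArg Prod.snd h)
  · rintro (u | u) (v | v) h <;> simp only [Sum.elim_inl, Sum.elim_inr, Prod.mk.injEq] at h
    · exact v.2 (inv_eq_one.mp h.2.symm)
    · obtain rfl : u.1 = v := Subtype.ext h.1
      exact u.2 h.2.symm
    · exact hne v.1 h.1.symm
    · exact hne v h.1.symm

theorem pairingVertex_injective {m : ℕ} (hm : Odd m) (hLpow : ∀ k ∈ L, k ^ m = 1)
    (hcomm : ∀ u : G, orderOf u = 2 → ∀ k ∈ L, Commute u k) :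
    Function.Injective (pairingVertex ψ) := by
  intro i j h
  have hi := pow_pairingVertex ψ hm hLpow hcomm i
  have hj := pow_pairingVertex ψ hm hLpow hcomm j
  rw [h] at hi
  exact pairingCoord_injective ψ hm hLpow (Prod.ext (hi.1.symm.trans hj.1) (hi.2.symm.trans hj.2))

theorem powerGraph_adj_pairingVertex {m : ℕ} (hm : Odd m) (hLpow : ∀ k ∈ L, k ^ m = 1)
    (hcomm : ∀ u : G, orderOf u = 2 → ∀ k ∈ L, Commute u k) (i) :
    (powerGraph G).Adj (pairingVertex ψ (.inl i)) (pairingVertex ψ (.inr i)) := by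
  have hpow := pow_pairingVertex ψ hm hLpow hcomm (.inr i)
  rcases i with u | u
  · refine powerGraph_adj_of_pow_eq ?_ (hpow.1.trans (mul_one _).symm)
    simpa [pairingVertex, pairingCoord] using u.2
  · refine powerGraph_adj_of_pow_eq ?_ (hpow.2.trans (one_mul _).symm)
    simpa [pairingVertex, pairingCoord, eq_comm] using (orderOf_eq_prime_iff.mp u.2).2

theorem inv_mem_range_pairingVertex (hLinv : ∀ k ∈ L, k⁻¹ ∈ L)
    (hcomm : ∀ u : G, orderOf u = 2 → ∀ k ∈ L, Commute u k) :
    ∀ x ∈ Set.range (pairingVertex ψ), x⁻¹ ∈ Set.range (pairingVertex ψ) := by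
  have hself {u : G} (hu : orderOf u = 2) : u⁻¹ = u :=
    inv_eq_self_iff_eq_one_or_orderOf_eq_two.mpr (.inr hu)
  rintro _ ⟨(u | u) | (u | u), rfl⟩
  · exact ⟨.inl (.inl u), by simp [pairingVertex, pairingCoord, hself u.1.2]⟩
  · exact ⟨.inl (.inr (ψ.symm ⟨_, hLinv _ (ψ u).2⟩)), by simp [pairingVertex, pairingCoord]⟩
  · exact ⟨.inr (.inr u.1), by
      simpa [pairingVertex, pairingCoord, hself u.1.2] using (hcomm _ u.1.2 _ (ψ u.1).2).eq⟩
  · by_cases hu : (ψ u : G) = 1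
    · exact ⟨.inr (.inr u), by simp [pairingVertex, pairingCoord, hu, hself u.2]⟩
    · exact ⟨.inr (.inl ⟨u, hu⟩), by
        simpa [pairingVertex, pairingCoord, hself u.2] using (hcomm _ u.2 _ (ψ u).2).inv_right.eq⟩

theorem mem_range_pairingVertex_of_inv_eq_self (h1 : (1 : G) ∈ L) {x : G} (hx : x⁻¹ = x) :
    x ∈ Set.range (pairingVertex ψ) := by
  rcases inv_eq_self_iff_eq_one_or_orderOf_eq_two.mp hx with rfl | hx
  · exact ⟨.inl (.inr (ψ.symm ⟨1, h1⟩)), by simp [pairingVertex, pairingCoord]⟩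
  · by_cases hu : (ψ ⟨x, hx⟩ : G) = 1
    · exact ⟨.inr (.inr ⟨x, hx⟩), by simp [pairingVertex, pairingCoord, hu]⟩
    · exact ⟨.inl (.inl ⟨⟨x, hx⟩, hu⟩), by simp [pairingVertex, pairingCoord]⟩

end Pairing

theorem hasPerfectMatching_powerGraph_of_equiv [Finite G] {m : ℕ} (hm : Odd m) {L : Set G}
    (h1 : (1 : G) ∈ L) (hLinv : ∀ k ∈ L, k⁻¹ ∈ L) (hLpow : ∀ k ∈ L, k ^ m = 1)
    (hcomm : ∀ u : G, orderOf u = 2 → ∀ k ∈ L, Commute u k)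
    (ψ : {u : G // orderOf u = 2} ≃ L) : hasPerfectMatching (powerGraph G) := by
  obtain ⟨M, hMverts, hM⟩ := Subgraph.exists_isMatching_of_injective _
    (pairingVertex_injective ψ hm hLpow hcomm) (powerGraph_adj_pairingVertex ψ hm hLpow hcomm)
  refine hasPerfectMatching_powerGraph_of_isMatching hM ?_ ?_ <;> rw [hMverts]
  exacts [inv_mem_range_pairingVertex ψ hLinv hcomm,
    fun x hx => mem_range_pairingVertex_of_inv_eq_self ψ h1 hx]

end PowerGraph

theorem stmt15 (G : Type*) [Group G] [Fintype G] (h : Even (Fintype.card G))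
    (n : ℕ) (hn : {t : G | orderOf t = 2}.ncard = n)
    (hnc : ∀ u : G, orderOf u = 2 → ∃ v : G, orderOf v = 2 ∧ u * v ≠ v * u)
    (hc : n * n.factorial ≤ Fintype.card G) :
    hasPerfectMatching (powerGraph G) := by
  subst hn
  set S := {t : G | orderOf t = 2}
  set K := Subgroup.centralizer S
  have hK : ∀ k : K, orderOf k ≠ 2 := fun k hk => by
    rw [← Subgroup.orderOf_coe] at hk
    obtain ⟨v, hv, hkv⟩ := hnc k hk
    exact hkv (Subgroup.mem_centralizer_iff.mp k.2 v hv).symm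
  have hKodd : Odd (Nat.card K) := odd_card_of_forall_orderOf_ne_two hK
  have hSK : Nat.card S ≤ Nat.card K := by
    refine Subgroup.le_card_centralizer_of_mul_factorial_le S (fun g x => ?_) ?_
    · change orderOf (g * x * g⁻¹) = 2 ↔ orderOf x = 2
      rw [← (SemiconjBy.conj_mk g x).orderOf_eq]
    · rwa [Nat.card_coe_set_eq, ← Fintype.card_eq_nat_card]
  rw [Nat.card_coe_set_eq] at hSK
  obtain ⟨L, hLK, h1, hLinv, hL⟩ :=
    K.exists_inv_closed_subset_ncard_eq_of_odd hKodd (odd_ncard_orderOf_eq_two h) hSK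
  obtain ⟨ψ⟩ : Nonempty (S ≃ L) := by
    rw [← Finite.card_eq, Nat.card_coe_set_eq, Nat.card_coe_set_eq, hL]
  exact hasPerfectMatching_powerGraph_of_equiv hKodd h1 hLinv
    (fun k hk => K.pow_card_eq_one_of_mem (hLK hk))
    (fun u hu k hk => Subgroup.mem_centralizer_iff.mp (hLK hk) u hu) ψ
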